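/- arXiv:2309.00925 — 2 statements merged into one kernel-verified Lean document; each statement's English description precedes it below -/
import Mathlib

section
/- Let p: ℕ → (0,1) with p(n) → 0, and let l: ℕ → ℕ satisfy (1 - p(n))^{l(n)} · n · p(n) → λ for some λ ∈ (0,∞), and suppose n·p(n) → ∞. Then l(n)·p(n)/log(n·p(n)) → 1 as n → ∞. -/
/-!
Taking logarithms, `l log (1 - p) + log (n p) → log λ` while `log (n p) → ∞`, so
`l log (1 - p) ~ -log (n p)`. Since `log (1 - p) ~ -p` as `p → 0`, this is `l p ~ log (n p)`.
-/

open Real Filter Topology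

lemma tendsto_div_log_one_sub_nhdsNE_zero :
    Tendsto (fun x : ℝ => x / log (1 - x)) (𝓝[≠] 0) (𝓝 (-1)) := by
  have hderiv : HasDerivAt (fun x : ℝ => log (1 - x)) (-1) 0 := by
    simpa using ((hasDerivAt_id (0 : ℝ)).const_sub 1).log (by norm_num)
  have hslope : Tendsto (fun x : ℝ => log (1 - x) / x) (𝓝[≠] 0) (𝓝 (-1)) := by
    refine (hasDerivAt_iff_tendsto_slope.mp hderiv).congr fun x => ?_
    simp [slope_def_field]
  simpa using hslope.inv₀ (by norm_num)

lemma tendsto_div_neg_one_of_tendsto_add {α : Type*} {L : Filter α} {f g : α → ℝ} {c : ℝ}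
    (hsum : Tendsto (fun x => f x + g x) L (𝓝 c)) (hg : Tendsto g L atTop) :
    Tendsto (fun x => f x / g x) L (𝓝 (-1)) := by
  have hratio := (hsum.div_atTop hg).sub_const 1
  rw [zero_sub] at hratio
  refine hratio.congr' ?_
  filter_upwards [hg.eventually_gt_atTop 0] with x hx
  rw [add_div, div_self hx.ne', add_sub_cancel_right]

lemma tendsto_mul_log_one_sub_add_log {α : Type*} {L : Filter α} {p y : α → ℝ} {k : α → ℕ}
    {c : ℝ} (hp : ∀ x, p x < 1) (hc : 0 < c)
    (hconv : Tendsto (fun x => (1 - p x) ^ k x * y x) L (𝓝 c)) (hy : ∀ᶠ x in L, 0 < y x) :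
    Tendsto (fun x => (k x : ℝ) * log (1 - p x) + log (y x)) L (𝓝 (log c)) := by
  refine ((continuousAt_log hc.ne').tendsto.comp hconv).congr' ?_
  filter_upwards [hy] with x hx
  have hbase : (1 - p x) ^ k x ≠ 0 := pow_ne_zero _ (by linarith [hp x])
  simp only [Function.comp_apply, log_mul hbase hx.ne', log_pow]

/-- if `p(n) ∈ (0,1)`, `p(n) → 0`, `n p(n) → ∞` and
`(1-p(n))^{l(n)} n p(n) → λ ∈ (0,∞)`, then `l(n) p(n) / log(n p(n)) → 1`. -/
theorem cluster_spacing_asymptotics (p : ℕ → ℝ) (hp : ∀ n, p n ∈ Set.Ioo (0 : ℝ) 1)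
    (hp0 : Tendsto p atTop (nhds 0))
    (l : ℕ → ℕ) (lam : ℝ) (hlam : 0 < lam)
    (hconv : Tendsto (fun n : ℕ => (1 - p n) ^ l n * ((n : ℝ) * p n)) atTop (nhds lam))
    (hnp : Tendsto (fun n : ℕ => (n : ℝ) * p n) atTop atTop) :
    Tendsto (fun n : ℕ => (l n : ℝ) * p n / Real.log ((n : ℝ) * p n)) atTop (nhds 1) := by
  have hsum := tendsto_mul_log_one_sub_add_log (fun n => (hp n).2) hlam hconv
    (hnp.eventually_gt_atTop 0)
  have hlogratio := tendsto_div_neg_one_of_tendsto_add hsum (tendsto_log_atTop.comp hnp)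
  have hp_ne : Tendsto p atTop (𝓝[≠] 0) :=
    tendsto_nhdsWithin_of_tendsto_nhds_of_eventually_within _ hp0
      (Eventually.of_forall fun n => (hp n).1.ne')
  have hprod := hlogratio.mul (tendsto_div_log_one_sub_nhdsNE_zero.comp hp_ne)
  rw [neg_one_mul, neg_neg] at hprod
  refine hprod.congr fun n => ?_
  have hlog_ne : log (1 - p n) ≠ 0 :=
    (log_neg (by linarith [(hp n).2]) (by linarith [(hp n).1])).ne
  simp only [Function.comp_apply]
  field_simp
end

section
/- Let r: ℕ → ℝ with |r(k)| ≤ ρ(1) < 1 for all k ≥ 1, where ρ(1) = sup_{k≥1}|r(k)|. Suppose r(k)·k^{1-ρ(1)} → 0 as k → ∞, and let u = u_n satisfy liminf_{n→∞} u_n/√(2 log n) > √((1+ρ(1))/2). Then S_n := (1/π) ∑_{k=1}^{n} ((n-k)|r(k)|/√(1-r(k)²)) exp(-u_n²/(1+|r(k)|)) → 0 as n → ∞. -/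
open Real Filter

private lemma aux_rpow_zero (e : ℝ) (he : e < 0) :
    Tendsto (fun n : ℕ => (n:ℝ)^e) atTop (nhds 0) := by
  have h := (tendsto_rpow_neg_atTop (y := -e) (by linarith)).comp tendsto_natCast_atTop_atTop
  simpa [Function.comp_def] using h

private lemma aux_rpow_log_zero (e : ℝ) (he : e < 0) :
    Tendsto (fun n : ℕ => (n:ℝ)^e * (1 + Real.log n)) atTop (nhds 0) := by
  have h1 := aux_rpow_zero e he
  have h2 : Tendsto (fun n : ℕ => (n:ℝ)^e * Real.log n) atTop (nhds 0) := by
    have h := ((isLittleO_log_rpow_atTop (r := -e) (by linarith)).tendsto_div_nhds_zero).comp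
      tendsto_natCast_atTop_atTop
    apply h.congr'
    filter_upwards [eventually_ge_atTop 1] with n hn
    have hn0 : (0:ℝ) < (n:ℝ) := by exact_mod_cast hn
    simp only [Function.comp]
    rw [Real.rpow_neg hn0.le, div_eq_mul_inv, inv_inv]
    ring
  have := (h1.add h2)
  simp only [add_zero] at this
  apply this.congr
  intro n; ring

private lemma aux_harmonic (n : ℕ) :
    ∑ k ∈ Finset.Icc 1 n, ((k:ℝ))⁻¹ ≤ 1 + Real.log n := by
  have h := harmonic_le_one_add_log n
  rw [harmonic_eq_sum_Icc] at h
  push_cast at h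
  exact h

set_option maxHeartbeats 2000000 in
/-- if `ρ(1) = sup_{k≥1}|r(k)| < 1`, `r(k) k^{1-ρ(1)} → 0` and
`liminf u_n/√(2 log n) > √((1+ρ(1))/2)`, then the Berman comparison bound
`S_n = (1/π) ∑_{k=1}^n ((n-k)|r(k)|/√(1-r(k)²)) e^{-u_n²/(1+|r(k)|)}` tends to `0`. -/
theorem berman_sum_tendsto_zero (r : ℕ → ℝ) (rho1 : ℝ)
    (hrho : rho1 = ⨆ k : ℕ, |r (k + 1)|) (hlt : rho1 < 1)
    (hdecay : Tendsto (fun k : ℕ => r k * (k : ℝ) ^ (1 - rho1)) atTop (nhds 0))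
    (u : ℕ → ℝ)
    (hliminf : Real.sqrt ((1 + rho1) / 2) <
      Filter.liminf (fun n : ℕ => u n / Real.sqrt (2 * Real.log n)) atTop) :
    Tendsto (fun n : ℕ => (1 / Real.pi) * ∑ k ∈ Finset.Icc 1 n,
        ((n : ℝ) - (k : ℝ)) * |r k| / Real.sqrt (1 - r k ^ 2) *
          Real.exp (-(u n) ^ 2 / (1 + |r k|))) atTop (nhds 0) := by
  -- Step 0: the sup is attained over a bounded family
  have hBdd : BddAbove (Set.range fun k : ℕ => |r (k + 1)|) := by
    by_contra hB
    have h0 : rho1 = 0 := by rw [hrho]; exact Real.iSup_of_not_bddAbove hB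
    have h1 : ∀ᶠ k : ℕ in atTop, |r k * (k:ℝ) ^ ((1:ℝ) - rho1)| < 1 := by
      have := Metric.tendsto_atTop.mp hdecay 1 one_pos
      obtain ⟨N, hN⟩ := this
      filter_upwards [eventually_ge_atTop N] with k hk
      have := hN k hk
      rwa [Real.dist_eq, sub_zero] at this
    obtain ⟨N, hN⟩ := eventually_atTop.mp h1
    apply hB
    refine ⟨1 + ∑ i ∈ Finset.range (N+1), |r (i+1)|, ?_⟩
    rintro y ⟨k, rfl⟩
    by_cases hk : N ≤ k + 1
    · have h2 := hN (k+1) hk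
      rw [h0] at h2
      have h3 : ((k:ℝ)+1) ^ ((1:ℝ) - 0) = (k:ℝ)+1 := by
        rw [sub_zero, Real.rpow_one]
      push_cast at h2
      rw [h3, abs_mul, abs_of_nonneg (by positivity : (0:ℝ) ≤ (k:ℝ)+1)] at h2
      have h4 : |r (k+1)| ≤ |r (k+1)| * ((k:ℝ)+1) := by
        nlinarith [abs_nonneg (r (k+1)), Nat.cast_nonneg (α := ℝ) k]
      have h5 : (0:ℝ) ≤ ∑ i ∈ Finset.range (N+1), |r (i+1)| :=
        Finset.sum_nonneg fun i _ => abs_nonneg _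
      linarith
    · push_neg at hk
      have hmem : k ∈ Finset.range (N+1) := Finset.mem_range.mpr (by omega)
      have := Finset.single_le_sum (f := fun i => |r (i+1)|)
        (fun i _ => abs_nonneg _) hmem
      linarith
  have hub : ∀ k : ℕ, |r (k+1)| ≤ rho1 := fun k => hrho ▸ le_ciSup hBdd k
  have hub' : ∀ k : ℕ, 1 ≤ k → |r k| ≤ rho1 := by
    intro k hk
    obtain ⟨j, rfl⟩ := Nat.exists_eq_add_of_le hk
    simpa [add_comm] using hub j
  have hρ0 : 0 ≤ rho1 := le_trans (abs_nonneg _) (hub 0)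
  -- Step 1: extract m and β from the liminf hypothesis
  obtain ⟨m, hm, hmev⟩ : ∃ m, Real.sqrt ((1+rho1)/2) < m ∧
      ∀ᶠ n : ℕ in atTop, m ≤ u n / Real.sqrt (2 * Real.log n) := by
    rw [Filter.liminf_eq] at hliminf
    have hSne : {a : ℝ | ∀ᶠ n : ℕ in atTop,
        a ≤ u n / Real.sqrt (2 * Real.log n)}.Nonempty := by
      by_contra h
      rw [Set.not_nonempty_iff_eq_empty] at h
      rw [h, Real.sSup_empty] at hliminf
      exact absurd hliminf (not_lt.2 (Real.sqrt_nonneg _))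
    obtain ⟨m, hmS, hm⟩ := exists_lt_of_lt_csSup hSne hliminf
    exact ⟨m, hm, hmS⟩
  have hm0 : 0 < m := lt_of_le_of_lt (Real.sqrt_nonneg _) hm
  set β : ℝ := 2 * m^2 with hβdef
  have hβ : 1 + rho1 < β := by
    have := (Real.sqrt_lt' hm0).mp hm
    nlinarith
  have hβ0 : 0 < β := by nlinarith
  -- Step 2: the cutoff K from the decay hypothesis
  set δ : ℝ := (β - (1 + rho1)) / (2 * β) with hδdef
  have hδpos : 0 < δ := div_pos (by linarith) (by linarith)
  obtain ⟨K0, hK0⟩ := Metric.tendsto_atTop.mp hdecay (min δ 1) (by positivity)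
  set K : ℕ := max K0 1 with hKdef
  have hrK : ∀ k : ℕ, K ≤ k → |r k| ≤ δ ∧ |r k| ≤ (k:ℝ)^(rho1 - 1) := by
    intro k hk
    have hk1 : 1 ≤ k := le_trans (le_max_right _ _) hk
    have hk0 : (0:ℝ) < (k:ℝ) := by exact_mod_cast hk1
    have hd := hK0 k (le_trans (le_max_left _ _) hk)
    rw [Real.dist_eq, sub_zero, abs_mul, abs_of_nonneg (Real.rpow_nonneg hk0.le _)] at hd
    have hpow1 : (1:ℝ) ≤ (k:ℝ)^(1 - rho1) := by
      have hk1' : (1:ℝ) ≤ (k:ℝ) := by exact_mod_cast hk1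
      have h := Real.rpow_le_rpow_of_exponent_le hk1' (by linarith : (0:ℝ) ≤ 1 - rho1)
      rwa [Real.rpow_zero] at h
    constructor
    · calc |r k| = |r k| * 1 := (mul_one _).symm
        _ ≤ |r k| * (k:ℝ)^(1-rho1) := mul_le_mul_of_nonneg_left hpow1 (abs_nonneg _)
        _ ≤ min δ 1 := hd.le
        _ ≤ δ := min_le_left _ _
    · have hinv : (k:ℝ)^(1-rho1) * (k:ℝ)^(rho1-1) = 1 := by
        rw [← Real.rpow_add hk0]; norm_num
      have h2 : |r k| * (k:ℝ)^(1-rho1) ≤ 1 := le_trans hd.le (min_le_right _ _)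
      calc |r k| = |r k| * (k:ℝ)^(1-rho1) * (k:ℝ)^(rho1-1) := by
            rw [mul_assoc, hinv, mul_one]
        _ ≤ 1 * (k:ℝ)^(rho1-1) :=
            mul_le_mul_of_nonneg_right h2 (Real.rpow_nonneg hk0.le _)
        _ = (k:ℝ)^(rho1-1) := one_mul _
  -- constants
  have hsq : (0:ℝ) < Real.sqrt (1 - rho1^2) := by
    apply Real.sqrt_pos.mpr; nlinarith
  set C1 : ℝ := (K:ℝ) * (rho1 / Real.sqrt (1 - rho1^2)) with hC1
  set C2 : ℝ := 1 / Real.sqrt (1 - rho1^2) with hC2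
  set e1 : ℝ := 1 - β/(1+rho1) with he1
  set e2 : ℝ := 1 + rho1 - β + β*δ with he2
  have he1neg : e1 < 0 := by
    rw [he1, sub_neg]
    rw [lt_div_iff₀ (by linarith)]
    linarith
  have he2neg : e2 < 0 := by
    rw [he2, hδdef]
    field_simp
    ring_nf
    nlinarith
  -- Step 3: eventual bound
  have key : ∀ᶠ n : ℕ in atTop, (1 / Real.pi) * ∑ k ∈ Finset.Icc 1 n,
        ((n : ℝ) - (k : ℝ)) * |r k| / Real.sqrt (1 - r k ^ 2) *
          Real.exp (-(u n) ^ 2 / (1 + |r k|)) ≤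
      (1 / Real.pi) * (C1 * (n:ℝ)^e1 + C2 * ((n:ℝ)^e2 * (1 + Real.log n))) := by
    obtain ⟨N1, hN1⟩ := eventually_atTop.mp hmev
    filter_upwards [eventually_ge_atTop N1, eventually_ge_atTop 2] with n hn1 hn2
    have hn0 : (0:ℝ) < (n:ℝ) := by
      have : (2:ℝ) ≤ (n:ℝ) := by exact_mod_cast hn2
      linarith
    have hlog : 0 < Real.log n := Real.log_pos (by exact_mod_cast hn2)
    have hu2 : β * Real.log n ≤ (u n)^2 := by
      have hs : 0 < Real.sqrt (2 * Real.log n) := Real.sqrt_pos.mpr (by linarith)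
      have h1 : m * Real.sqrt (2 * Real.log n) ≤ u n := by
        have h := hN1 n hn1
        rwa [le_div_iff₀ hs] at h
      have h2 : 0 ≤ m * Real.sqrt (2 * Real.log n) := by positivity
      have h3 := pow_le_pow_left₀ h2 h1 2
      rw [mul_pow, Real.sq_sqrt (by linarith : (0:ℝ) ≤ 2 * Real.log n)] at h3
      rw [hβdef]; nlinarith
    apply mul_le_mul_of_nonneg_left _ (by positivity)
    rw [← Finset.sum_filter_add_sum_filter_not (Finset.Icc 1 n) (fun k => k < K)]
    apply add_le_add
    · -- small k part
      calc ∑ k ∈ (Finset.Icc 1 n).filter (fun k => k < K),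
            ((n : ℝ) - (k : ℝ)) * |r k| / Real.sqrt (1 - r k ^ 2) *
              Real.exp (-(u n) ^ 2 / (1 + |r k|))
          ≤ ((Finset.Icc 1 n).filter (fun k => k < K)).card •
            ((n:ℝ) * rho1 / Real.sqrt (1-rho1^2) * (n:ℝ)^(-(β/(1+rho1)))) := by
            apply Finset.sum_le_card_nsmul
            intro k hk
            rw [Finset.mem_filter, Finset.mem_Icc] at hk
            obtain ⟨⟨hk1, hkn⟩, -⟩ := hk
            have hkn' : (k:ℝ) ≤ (n:ℝ) := by exact_mod_cast hkn
            have hk1' : (0:ℝ) ≤ (k:ℝ) := by positivity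
            have hrk : |r k| ≤ rho1 := hub' k hk1
            have hsqk : Real.sqrt (1-rho1^2) ≤ Real.sqrt (1 - r k ^ 2) := by
              apply Real.sqrt_le_sqrt
              have : r k ^ 2 ≤ rho1 ^ 2 := by
                rw [← sq_abs]
                exact pow_le_pow_left₀ (abs_nonneg _) hrk 2
              linarith
            have hA : ((n : ℝ) - (k : ℝ)) * |r k| / Real.sqrt (1 - r k ^ 2) ≤
                (n:ℝ) * rho1 / Real.sqrt (1-rho1^2) := by
              apply div_le_div₀ (mul_nonneg hn0.le hρ0) _ hsq hsqk
              apply mul_le_mul (by linarith) hrk (abs_nonneg _) hn0.le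
            have hE : Real.exp (-(u n) ^ 2 / (1 + |r k|)) ≤ (n:ℝ)^(-(β/(1+rho1))) := by
              rw [Real.rpow_def_of_pos hn0, Real.exp_le_exp]
              have hx0 : (0:ℝ) < 1 + |r k| := by positivity
              have h12 : β * Real.log n / (1 + rho1) ≤ (u n)^2 / (1 + |r k|) :=
                div_le_div₀ (sq_nonneg _) hu2 hx0 (by linarith)
              calc -(u n)^2 / (1 + |r k|) = -((u n)^2 / (1 + |r k|)) := by rw [neg_div]
                _ ≤ -(β * Real.log n / (1 + rho1)) := neg_le_neg h12
                _ = Real.log n * (-(β/(1+rho1))) := by ring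
            exact mul_le_mul hA hE (Real.exp_nonneg _)
              (div_nonneg (mul_nonneg hn0.le hρ0) (Real.sqrt_nonneg _))
        _ ≤ C1 * (n:ℝ)^e1 := by
            rw [nsmul_eq_mul]
            have hcard : (((Finset.Icc 1 n).filter (fun k => k < K)).card : ℝ) ≤ (K:ℝ) := by
              have hsub : (Finset.Icc 1 n).filter (fun k => k < K) ⊆ Finset.Ico 1 K := by
                intro k hk
                rw [Finset.mem_filter, Finset.mem_Icc] at hk
                exact Finset.mem_Ico.mpr ⟨hk.1.1, hk.2⟩
              have := Finset.card_le_card hsub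
              rw [Nat.card_Ico] at this
              exact_mod_cast le_trans this (Nat.sub_le _ _)
            have hbn : (0:ℝ) ≤ (n:ℝ) * rho1 / Real.sqrt (1-rho1^2) * (n:ℝ)^(-(β/(1+rho1))) :=
              mul_nonneg (div_nonneg (mul_nonneg hn0.le hρ0) (Real.sqrt_nonneg _))
                (Real.rpow_nonneg hn0.le _)
            calc (((Finset.Icc 1 n).filter (fun k => k < K)).card : ℝ) *
                  ((n:ℝ) * rho1 / Real.sqrt (1-rho1^2) * (n:ℝ)^(-(β/(1+rho1))))
                ≤ (K:ℝ) * ((n:ℝ) * rho1 / Real.sqrt (1-rho1^2) * (n:ℝ)^(-(β/(1+rho1)))) :=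
                  mul_le_mul_of_nonneg_right hcard hbn
              _ = C1 * (n:ℝ)^e1 := by
                  rw [hC1, he1]
                  have hrw : (n:ℝ)^(1 - β/(1+rho1)) = (n:ℝ)^(1:ℝ) * (n:ℝ)^(-(β/(1+rho1))) := by
                    rw [← Real.rpow_add hn0]; ring_nf
                  rw [hrw, Real.rpow_one]; ring
    · -- large k part
      calc ∑ k ∈ (Finset.Icc 1 n).filter (fun k => ¬ k < K),
            ((n : ℝ) - (k : ℝ)) * |r k| / Real.sqrt (1 - r k ^ 2) *
              Real.exp (-(u n) ^ 2 / (1 + |r k|))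
          ≤ ∑ k ∈ (Finset.Icc 1 n).filter (fun k => ¬ k < K), C2 * (n:ℝ)^e2 * (k:ℝ)⁻¹ := by
            apply Finset.sum_le_sum
            intro k hk
            rw [Finset.mem_filter, Finset.mem_Icc] at hk
            obtain ⟨⟨hk1, hkn⟩, hkK⟩ := hk
            push_neg at hkK
            obtain ⟨hrδ, hrdec⟩ := hrK k hkK
            have hk0 : (0:ℝ) < (k:ℝ) := by exact_mod_cast hk1
            have hkn' : (k:ℝ) ≤ (n:ℝ) := by exact_mod_cast hkn
            have hrk : |r k| ≤ rho1 := hub' k hk1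
            have hsqk : Real.sqrt (1-rho1^2) ≤ Real.sqrt (1 - r k ^ 2) := by
              apply Real.sqrt_le_sqrt
              have : r k ^ 2 ≤ rho1 ^ 2 := by
                rw [← sq_abs]; exact pow_le_pow_left₀ (abs_nonneg _) hrk 2
              linarith
            have hnum : ((n:ℝ) - (k:ℝ)) * |r k| ≤ (n:ℝ) * ((n:ℝ)^rho1 * (k:ℝ)⁻¹) := by
              have h1 : |r k| ≤ (n:ℝ)^rho1 * (k:ℝ)⁻¹ := by
                have h2 : (k:ℝ)^(rho1-1) = (k:ℝ)^rho1 * (k:ℝ)⁻¹ := by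
                  rw [← Real.rpow_neg_one (k:ℝ), ← Real.rpow_add hk0]; ring_nf
                have h3 : (k:ℝ)^rho1 ≤ (n:ℝ)^rho1 := Real.rpow_le_rpow hk0.le hkn' hρ0
                calc |r k| ≤ (k:ℝ)^(rho1-1) := hrdec
                  _ = (k:ℝ)^rho1 * (k:ℝ)⁻¹ := h2
                  _ ≤ (n:ℝ)^rho1 * (k:ℝ)⁻¹ :=
                      mul_le_mul_of_nonneg_right h3 (by positivity)
              apply mul_le_mul (by linarith) h1 (abs_nonneg _) hn0.le
            have hA : ((n : ℝ) - (k : ℝ)) * |r k| / Real.sqrt (1 - r k ^ 2) ≤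
                (n:ℝ) * ((n:ℝ)^rho1 * (k:ℝ)⁻¹) / Real.sqrt (1-rho1^2) :=
              div_le_div₀ (by positivity) hnum hsq hsqk
            have hE : Real.exp (-(u n) ^ 2 / (1 + |r k|)) ≤ (n:ℝ)^(β*δ-β) := by
              rw [Real.rpow_def_of_pos hn0, Real.exp_le_exp]
              have hx0 : (0:ℝ) < 1 + |r k| := by positivity
              have hstep1 : -(u n)^2 / (1 + |r k|) ≤ -((u n)^2 * (1 - |r k|)) := by
                rw [neg_div, neg_le_neg_iff, le_div_iff₀ hx0]
                nlinarith [sq_nonneg (u n), abs_nonneg (r k), sq_nonneg (|r k|)]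
              have hstep2 : (β * Real.log n) * (1 - |r k|) ≤ (u n)^2 * (1 - |r k|) :=
                mul_le_mul_of_nonneg_right hu2 (by linarith)
              have hstep3 : (β * Real.log n) * |r k| ≤ (β * Real.log n) * δ :=
                mul_le_mul_of_nonneg_left hrδ (by positivity)
              calc -(u n)^2 / (1 + |r k|) ≤ -((u n)^2 * (1 - |r k|)) := hstep1
                _ ≤ -((β * Real.log n) * (1 - |r k|)) := neg_le_neg hstep2
                _ = (β * Real.log n) * |r k| - β * Real.log n := by ring
                _ ≤ (β * Real.log n) * δ - β * Real.log n := by linarith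
                _ = Real.log n * (β*δ-β) := by ring
            have hfinal : ((n : ℝ) - (k : ℝ)) * |r k| / Real.sqrt (1 - r k ^ 2) *
                  Real.exp (-(u n) ^ 2 / (1 + |r k|)) ≤
                ((n:ℝ) * ((n:ℝ)^rho1 * (k:ℝ)⁻¹) / Real.sqrt (1-rho1^2)) * (n:ℝ)^(β*δ-β) :=
              mul_le_mul hA hE (Real.exp_nonneg _) (by positivity)
            refine le_trans hfinal (le_of_eq ?_)
            rw [hC2, he2]
            have hrw : (n:ℝ)^(1 + rho1 - β + β*δ) =
                (n:ℝ)^(1:ℝ) * ((n:ℝ)^rho1 * (n:ℝ)^(β*δ-β)) := by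
              rw [← Real.rpow_add hn0, ← Real.rpow_add hn0]; ring_nf
            rw [hrw, Real.rpow_one]; ring
        _ ≤ C2 * ((n:ℝ)^e2 * (1 + Real.log n)) := by
            rw [← Finset.mul_sum]
            have hC2pos : (0:ℝ) < C2 := by rw [hC2]; positivity
            have hsum : ∑ k ∈ (Finset.Icc 1 n).filter (fun k => ¬ k < K), ((k:ℝ))⁻¹ ≤
                1 + Real.log n := by
              refine le_trans (Finset.sum_le_sum_of_subset_of_nonneg
                (Finset.filter_subset _ _) ?_) (aux_harmonic n)
              intro k _ _; positivity
            calc C2 * (n:ℝ)^e2 * ∑ k ∈ (Finset.Icc 1 n).filter (fun k => ¬ k < K), ((k:ℝ))⁻¹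
                ≤ C2 * (n:ℝ)^e2 * (1 + Real.log n) := by
                  apply mul_le_mul_of_nonneg_left hsum
                  exact mul_nonneg hC2pos.le (Real.rpow_nonneg hn0.le _)
              _ = C2 * ((n:ℝ)^e2 * (1 + Real.log n)) := by ring
  -- Step 4: nonnegativity
  have hnonneg : ∀ n : ℕ, 0 ≤ (1 / Real.pi) * ∑ k ∈ Finset.Icc 1 n,
        ((n : ℝ) - (k : ℝ)) * |r k| / Real.sqrt (1 - r k ^ 2) *
          Real.exp (-(u n) ^ 2 / (1 + |r k|)) := by
    intro n
    apply mul_nonneg (by positivity)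
    apply Finset.sum_nonneg
    intro k hk
    rw [Finset.mem_Icc] at hk
    have : (k:ℝ) ≤ (n:ℝ) := by exact_mod_cast hk.2
    apply mul_nonneg (div_nonneg (mul_nonneg (by linarith) (abs_nonneg _)) (Real.sqrt_nonneg _))
      (Real.exp_nonneg _)
  -- Step 5: conclude by squeezing
  have hg : Tendsto (fun n : ℕ => (1 / Real.pi) * (C1 * (n:ℝ)^e1 +
      C2 * ((n:ℝ)^e2 * (1 + Real.log n)))) atTop (nhds 0) := by
    have h1 := (aux_rpow_zero e1 he1neg).const_mul C1
    have h2 := (aux_rpow_log_zero e2 he2neg).const_mul C2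
    have := ((h1.add h2).const_mul (1 / Real.pi))
    simpa using this
  exact tendsto_of_tendsto_of_tendsto_of_le_of_le' tendsto_const_nhds hg
    (Eventually.of_forall hnonneg) key
end
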